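/- (Exactness of the classical MDS embedding.) Let D be a symmetric n × n real matrix with zero diagonal, let J = Iₙ − (1/n)𝟙𝟙ᵀ, and suppose G = −½ J D J is positive semidefinite with eigenvalues λ₁ ≥ λ₂ ≥ … ≥ λₙ ≥ 0 and a corresponding orthonormal basis of eigenvectors u₁, …, uₙ. If G has rank at most m, then the points x₁, …, xₙ ∈ ℝᵐ defined coordinatewise by (xᵢ)ₖ = √λₖ · uₖ(i), for k = 1, …, m, satisfy ‖xᵢ − xⱼ‖² = D_{ij} for all i, j. In other words, the eigen-decomposition solution x*ᵢ = (√λ₁ u₁(i), …, √λₘ uₘ(i)) of classical MDS exactly reproduces the distance matrix whenever G has rank at most m. -/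

import Mathlib

/-!
Writing `U` for the orthogonal matrix whose rows are the `uₖ`, the eigen-equations give
`G = Uᵀ diag(λ) U`, hence `G.rank = #{k | λₖ ≠ 0}`; as the `λₖ` are nonnegative and decreasing,
`λₖ = 0` for `k ≥ m`, so `‖xᵢ - xⱼ‖² = ∑ₖ λₖ (uₖ(i) - uₖ(j))² = Gᵢᵢ + Gⱼⱼ - Gᵢⱼ - Gⱼᵢ`.
The right-hand side is `(eᵢ - eⱼ)ᵀ G (eᵢ - eⱼ)`, and `J` fixes the zero-sum vector `eᵢ - eⱼ`,
so it equals `-½ (eᵢ - eⱼ)ᵀ D (eᵢ - eⱼ) = Dᵢⱼ`.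
-/

open Matrix

namespace Matrix

variable {ι R : Type*}

section DoubleCentering

variable [CommRing R]

lemma dotProduct_mul_mul_mulVec_of_mulVec_eq [Fintype ι] {J : Matrix ι ι R} (A : Matrix ι ι R)
    {v : ι → R} (hJt : Jᵀ = J) (hJv : J *ᵥ v = v) :
    v ⬝ᵥ ((J * A * J) *ᵥ v) = v ⬝ᵥ (A *ᵥ v) := by
  rw [← mulVec_mulVec, ← mulVec_mulVec, hJv, dotProduct_mulVec, ← mulVec_transpose, hJt, hJv]

lemma centering_transpose [DecidableEq ι] (c : R) :
    (1 - c • of fun _ _ => (1 : R) : Matrix ι ι R)ᵀ = 1 - c • of fun _ _ => 1 := by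
  ext
  simp [one_apply, eq_comm]

lemma centering_mulVec_of_sum_eq_zero [Fintype ι] [DecidableEq ι] (c : R) {v : ι → R}
    (hv : ∑ i, v i = 0) : (1 - c • of fun _ _ => (1 : R)) *ᵥ v = v := by
  ext i
  simp [mulVec, dotProduct, sub_mul, Finset.sum_sub_distrib, ← Finset.mul_sum, hv, one_apply]

lemma single_sub_single_dotProduct_mulVec [Fintype ι] [DecidableEq ι] (A : Matrix ι ι R)
    (i j : ι) :
    (Pi.single i 1 - Pi.single j 1) ⬝ᵥ (A *ᵥ (Pi.single i 1 - Pi.single j 1)) =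
      A i i + A j j - A i j - A j i := by
  simp only [mulVec_sub, sub_dotProduct, dotProduct_sub, single_one_dotProduct, mulVec_single_one,
    col_apply]
  ring

end DoubleCentering

lemma double_centering_apply [Fintype ι] [DecidableEq ι] [Field R] [NeZero (2 : R)] (c : R)
    {D : Matrix ι ι R} (hD : D.IsSymm) (hdiag : ∀ i, D i i = 0) (i j : ι) :
    let G := (-(1 / 2) : R) • ((1 - c • of fun _ _ => 1) * D * (1 - c • of fun _ _ => 1))
    G i i + G j j - G i j - G j i = D i j := by
  intro G
  have hv : ∑ k, (Pi.single i 1 - Pi.single j 1 : ι → R) k = 0 := by simp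
  have h := dotProduct_mul_mul_mulVec_of_mulVec_eq D (centering_transpose c)
    (centering_mulVec_of_sum_eq_zero c hv)
  rw [single_sub_single_dotProduct_mulVec, single_sub_single_dotProduct_mulVec, hdiag, hdiag,
    hD.apply i j] at h
  simp only [G, smul_apply, smul_eq_mul]
  linear_combination (norm := skip) (-(1 / 2) : R) * h
  field_simp
  ring

section Eigenvectors

variable [Fintype ι] [DecidableEq ι] {G : Matrix ι ι R} {lam : ι → R} {u : ι → ι → R}

lemma of_mul_transpose_of_orthonormal [CommRing R]
    (horth : ∀ k l, u k ⬝ᵥ u l = if k = l then 1 else 0) : of u * (of u)ᵀ = 1 := by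
  ext k l
  simpa [mul_apply, one_apply, dotProduct] using horth k l

lemma eq_transpose_mul_diagonal_mul_of_eigenvectors [CommRing R]
    (heig : ∀ k, G *ᵥ u k = lam k • u k)
    (horth : ∀ k l, u k ⬝ᵥ u l = if k = l then 1 else 0) :
    G = (of u)ᵀ * diagonal lam * of u := by
  have hcols : G * (of u)ᵀ = (of u)ᵀ * diagonal lam := by
    ext i k
    rw [mul_diagonal]
    simpa [mul_apply, mulVec, dotProduct, mul_comm] using congrFun (heig k) i
  rw [← hcols, Matrix.mul_assoc, mul_eq_one_comm.mp (of_mul_transpose_of_orthonormal horth),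
    Matrix.mul_one]

lemma rank_eq_card_ne_zero_of_eigenvectors [Field R] [DecidableEq R]
    (heig : ∀ k, G *ᵥ u k = lam k • u k)
    (horth : ∀ k l, u k ⬝ᵥ u l = if k = l then 1 else 0) :
    G.rank = Fintype.card {k // lam k ≠ 0} := by
  have hU := of_mul_transpose_of_orthonormal horth
  rw [eq_transpose_mul_diagonal_mul_of_eigenvectors heig horth,
    rank_mul_eq_left_of_isUnit_det _ _ (isUnit_det_of_right_inverse hU),
    rank_mul_eq_right_of_isUnit_det _ _ (isUnit_det_of_left_inverse hU), rank_diagonal]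

lemma apply_eq_sum_of_eigenvectors [CommRing R] (heig : ∀ k, G *ᵥ u k = lam k • u k)
    (horth : ∀ k l, u k ⬝ᵥ u l = if k = l then 1 else 0) (i j : ι) :
    G i j = ∑ k, lam k * u k i * u k j := by
  rw [eq_transpose_mul_diagonal_mul_of_eigenvectors heig horth]
  simp only [mul_apply (M := _ * diagonal lam), mul_diagonal, transpose_apply, of_apply]
  exact Finset.sum_congr rfl fun k _ => by ring

lemma sum_mul_sub_sq_eq_of_eigenvectors [CommRing R] (heig : ∀ k, G *ᵥ u k = lam k • u k)
    (horth : ∀ k l, u k ⬝ᵥ u l = if k = l then 1 else 0) (i j : ι) :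
    ∑ k, lam k * (u k i - u k j) ^ 2 = G i i + G j j - G i j - G j i := by
  simp only [apply_eq_sum_of_eigenvectors heig horth, ← Finset.sum_add_distrib,
    ← Finset.sum_sub_distrib]
  exact Finset.sum_congr rfl fun k _ => by ring

end Eigenvectors

end Matrix

lemma Antitone.eq_zero_of_card_ne_zero_le {α : Type*} [PartialOrder α] [Zero α] [DecidableEq α]
    {n m : ℕ} {lam : Fin n → α} (hanti : Antitone lam) (hnonneg : ∀ k, 0 ≤ lam k)
    (hcard : Fintype.card {k // lam k ≠ 0} ≤ m) {k : Fin n} (hk : m ≤ k) : lam k = 0 := by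
  by_contra hne
  have hpos : 0 < lam k := (hnonneg k).lt_of_ne' hne
  have hsub : Finset.Iic k ⊆ Finset.univ.filter (lam · ≠ 0) := fun l hl => by
    simpa using (hpos.trans_le (hanti (Finset.mem_Iic.mp hl))).ne'
  have := Finset.card_le_card hsub
  rw [Fin.card_Iic, ← Fintype.card_subtype] at this
  omega

lemma EuclideanSpace.sq_norm_sub_of_apply_eq_sqrt_mul {ι κ : Type*} [Fintype κ]
    {x : ι → EuclideanSpace ℝ κ} {w : κ → ℝ} {v : κ → ι → ℝ} (hw : ∀ k, 0 ≤ w k)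
    (hx : ∀ i k, x i k = √(w k) * v k i) (i j : ι) :
    ‖x i - x j‖ ^ 2 = ∑ k, w k * (v k i - v k j) ^ 2 := by
  simp only [EuclideanSpace.real_norm_sq_eq, PiLp.sub_apply, hx, ← mul_sub, mul_pow,
    Real.sq_sqrt (hw _)]

theorem classical_mds_exact_general
    (n m : ℕ) (hmn : m ≤ n)
    (D J G : Matrix (Fin n) (Fin n) ℝ)
    (hDsymm : D.IsSymm)
    (hDdiag : ∀ i, D i i = 0)
    (hJ : J = 1 - (1 / (n : ℝ)) • Matrix.of (fun _ _ => (1 : ℝ)))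
    (hG : G = (-(1 / 2) : ℝ) • (J * D * J))
    (lam : Fin n → ℝ) (u : Fin n → (Fin n → ℝ))
    (hdecr : ∀ k l : Fin n, k ≤ l → lam l ≤ lam k)
    (hnonneg : ∀ k, 0 ≤ lam k)
    (heig : ∀ k, G *ᵥ u k = lam k • u k)
    (horth : ∀ k l, u k ⬝ᵥ u l = if k = l then 1 else 0)
    (hrank : G.rank ≤ m)
    (x : Fin n → EuclideanSpace ℝ (Fin m))
    (hx : ∀ i : Fin n, ∀ k : Fin m,
      x i k = Real.sqrt (lam (Fin.castLE hmn k)) * u (Fin.castLE hmn k) i) :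
    ∀ i j, ‖x i - x j‖ ^ 2 = D i j := by
  intro i j
  have hcard : Fintype.card {k // lam k ≠ 0} ≤ m :=
    rank_eq_card_ne_zero_of_eigenvectors heig horth ▸ hrank
  have htail : ∀ k ∉ Set.range (Fin.castLE hmn), lam k * (u k i - u k j) ^ 2 = 0 := by
    intro k hk
    rw [Fin.range_castLE, Set.mem_ofPred_eq, not_lt] at hk
    rw [Antitone.eq_zero_of_card_ne_zero_le hdecr hnonneg hcard hk, zero_mul]
  calc ‖x i - x j‖ ^ 2 = ∑ k : Fin m, lam (Fin.castLE hmn k) *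
        (u (Fin.castLE hmn k) i - u (Fin.castLE hmn k) j) ^ 2 :=
        EuclideanSpace.sq_norm_sub_of_apply_eq_sqrt_mul (fun _ => hnonneg _) hx i j
    _ = ∑ k, lam k * (u k i - u k j) ^ 2 :=
        Fintype.sum_of_injective _ (Fin.castLE_injective hmn) _ _ htail fun _ => rfl
    _ = G i i + G j j - G i j - G j i := sum_mul_sub_sq_eq_of_eigenvectors heig horth i j
    _ = D i j := by
        subst hG hJ
        exact double_centering_apply _ hDsymm hDdiag i j

/-- Exactness of the classical MDS embedding: if G = -½ J D J is positive
semidefinite with rank at most m, then the eigen-decomposition configuration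
(xᵢ)ₖ = √λₖ · uₖ(i) exactly reproduces D as a squared-distance matrix. -/
theorem classical_mds_exact
    (n m : ℕ) (hn : 1 ≤ n) (hmn : m ≤ n)
    (D J G : Matrix (Fin n) (Fin n) ℝ)
    (hDsymm : D.IsSymm)
    (hDdiag : ∀ i, D i i = 0)
    (hJ : J = 1 - (1 / (n : ℝ)) • Matrix.of (fun _ _ => (1 : ℝ)))
    (hG : G = (-(1 / 2) : ℝ) • (J * D * J))
    (hGsymm : G.IsSymm)
    (hGpsd : ∀ v : Fin n → ℝ, 0 ≤ v ⬝ᵥ (G *ᵥ v))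
    (lam : Fin n → ℝ) (u : Fin n → (Fin n → ℝ))
    (hdecr : ∀ k l : Fin n, k ≤ l → lam l ≤ lam k)
    (hnonneg : ∀ k, 0 ≤ lam k)
    (heig : ∀ k, G *ᵥ u k = lam k • u k)
    (horth : ∀ k l, u k ⬝ᵥ u l = if k = l then 1 else 0)
    (hrank : G.rank ≤ m)
    (x : Fin n → EuclideanSpace ℝ (Fin m))
    (hx : ∀ i : Fin n, ∀ k : Fin m,
      x i k = Real.sqrt (lam (Fin.castLE hmn k)) * u (Fin.castLE hmn k) i) :
    ∀ i j, ‖x i - x j‖ ^ 2 = D i j :=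
  classical_mds_exact_general n m hmn D J G hDsymm hDdiag hJ hG lam u hdecr hnonneg heig horth hrank
    x hx
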